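/- arXiv:1203.3811 — 6 statements merged into one kernel-verified Lean document; each statement's English description precedes it below -/
import Mathlib

section
/- A finite simple graph G has an inherently convex Cayley configuration space if and only if G is 3-realizable. -/
/-!
Squared edge lengths are additive under concatenation of realizations (`ℝᵐ × ℝⁿ = ℝᵐ⁺ⁿ`)
and scale by `c` when a realization is scaled by `√c`, so the squared-length vectors of
realizations in all dimensions form a convex cone. If `G` is 3-realizable, every vector of
that cone is already attained in `ℝ³`, which makes each Cayley configuration space convex.
Conversely, for `F = ∅` convexity makes the vectors attained in `ℝ³` a convex cone; a
realization in `ℝᵏ` has squared lengths equal to the sum of those of its `k` coordinate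
projections, each of which lies on a line in `ℝ³`, so they are attained in `ℝ³` as well.
-/

/-- `f : V → ℝᵏ` is a realization of the graph `G` with edge-length assignment `d`:
every edge `{u,v}` of `G` is drawn with length `d {u,v}`. -/
def IsRealization {V : Type} (G : SimpleGraph V) (d : Sym2 V → ℝ)
    (k : ℕ) (f : V → EuclideanSpace ℝ (Fin k)) : Prop :=
  ∀ u v : V, G.Adj u v → dist (f u) (f v) = d s(u, v)

/-- The edge-length assignment `d` on `G` is Euclidean realizable:
`(G, d)` has a realization in `ℝᵏ` for some `k ≥ 1`. -/
def EuclideanRealizable {V : Type} (G : SimpleGraph V) (d : Sym2 V → ℝ) : Prop :=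
  ∃ k : ℕ, 1 ≤ k ∧ ∃ f : V → EuclideanSpace ℝ (Fin k), IsRealization G d k f

/-- `G` is `n`-realizable: every Euclidean realizable (nonnegative) edge-length
assignment of `G` has a realization in `ℝⁿ`. -/
def DRealizable {V : Type} (G : SimpleGraph V) (n : ℕ) : Prop :=
  ∀ d : Sym2 V → ℝ, (∀ e ∈ G.edgeSet, 0 ≤ d e) → EuclideanRealizable G d →
    ∃ f : V → EuclideanSpace ℝ (Fin n), IsRealization G d n f

/-- The Cayley configuration space `Φ_H(G, F, d_F)`: the set of vectors `ℓ : H → ℝ` of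
squared distances over the non-edges `H`, attained by realizations in `ℝ³` of the
distance constraint system `((V, F), d_F)`. -/
def CayleySpace {V : Type} (F H : Set (Sym2 V)) (dF : Sym2 V → ℝ) : Set (H → ℝ) :=
  { ℓ | ∃ f : V → EuclideanSpace ℝ (Fin 3),
      (∀ u v : V, s(u, v) ∈ F → dist (f u) (f v) = dF s(u, v)) ∧
      (∀ e : H, ∀ u v : V, (e : Sym2 V) = s(u, v) → ℓ e = dist (f u) (f v) ^ 2) }

open Finset

noncomputable def pairDist {V E : Type*} [PseudoMetricSpace E] (f : V → E) : Sym2 V → ℝ :=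
  Sym2.lift ⟨fun u v => dist (f u) (f v), fun u v => dist_comm (f u) (f v)⟩

section PairDist

variable {V : Type*}

@[simp]
lemma pairDist_mk {E : Type*} [PseudoMetricSpace E] (f : V → E) (u v : V) :
    pairDist f s(u, v) = dist (f u) (f v) := rfl

lemma pairDist_nonneg {E : Type*} [PseudoMetricSpace E] (f : V → E) (e : Sym2 V) :
    0 ≤ pairDist f e := by
  induction e using Sym2.ind with | _ u v => exact dist_nonneg

lemma pairDist_sqrt_smul_sq {E : Type*} [SeminormedAddCommGroup E] [NormedSpace ℝ E]
    (f : V → E) {c : ℝ} (hc : 0 ≤ c) (e : Sym2 V) :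
    pairDist (√c • f) e ^ 2 = c * pairDist f e ^ 2 := by
  induction e using Sym2.ind with
  | _ u v => simp [← smul_sub, dist_eq_norm, norm_smul, mul_pow, Real.sq_sqrt hc]

lemma pairDist_sq_eq_sum {ι : Type*} [Fintype ι] (f : V → EuclideanSpace ℝ ι) (e : Sym2 V) :
    pairDist f e ^ 2 = ∑ i, pairDist (fun v => f v i) e ^ 2 := by
  induction e using Sym2.ind with | _ u v => exact EuclideanSpace.dist_sq_eq _ _

lemma pairDist_single {ι : Type*} [Fintype ι] [DecidableEq ι] (i : ι) (f : V → ℝ) :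
    pairDist (fun v => EuclideanSpace.single i (f v)) = pairDist f := by
  ext e
  induction e using Sym2.ind with | _ u v => simp

lemma exists_pairDist_sq_eq_add {m n : ℕ} (f₀ : V → EuclideanSpace ℝ (Fin m))
    (f₁ : V → EuclideanSpace ℝ (Fin n)) :
    ∃ g : V → EuclideanSpace ℝ (Fin (m + n)),
      ∀ e, pairDist g e ^ 2 = pairDist f₀ e ^ 2 + pairDist f₁ e ^ 2 := by
  refine ⟨fun v => WithLp.toLp 2 (Fin.append (f₀ v).ofLp (f₁ v).ofLp), fun e => ?_⟩
  induction e using Sym2.ind with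
  | _ u v => simp [EuclideanSpace.dist_sq_eq, Fin.sum_univ_add]

end PairDist

lemma Convex.sum_mem_of_smul_mem {E ι : Type*} [AddCommGroup E] [Module ℝ E] {s : Set E}
    (hs : Convex ℝ s) (hne : s.Nonempty) (hsmul : ∀ c : ℝ, 0 ≤ c → ∀ x ∈ s, c • x ∈ s)
    (t : Finset ι) {z : ι → E} (hz : ∀ i ∈ t, z i ∈ s) : ∑ i ∈ t, z i ∈ s := by
  induction t using Finset.cons_induction with
  | empty =>
    obtain ⟨x, hx⟩ := hne
    simpa using hsmul 0 le_rfl x hx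
  | cons i t _ ih =>
    have hmid := hs (hz i (mem_cons_self i t)) (ih fun j hj => hz j (mem_cons_of_mem hj))
      (by norm_num : (0 : ℝ) ≤ 1 / 2) (by norm_num : (0 : ℝ) ≤ 1 / 2) (by norm_num)
    convert hsmul 2 zero_le_two _ hmid using 1
    rw [sum_cons, smul_add, smul_smul, smul_smul]
    norm_num

section Realization

variable {V : Type}

lemma isRealization_iff_pairDist {G : SimpleGraph V} {d : Sym2 V → ℝ} {k : ℕ}
    {f : V → EuclideanSpace ℝ (Fin k)} :
    IsRealization G d k f ↔ ∀ e ∈ G.edgeSet, pairDist f e = d e := by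
  refine ⟨fun h e he => ?_, fun h u v huv => h s(u, v) huv⟩
  induction e using Sym2.ind with | _ u v => exact h u v he

lemma mem_cayleySpace_iff {F H : Set (Sym2 V)} {dF : Sym2 V → ℝ} {ℓ : H → ℝ} :
    ℓ ∈ CayleySpace F H dF ↔ ∃ f : V → EuclideanSpace ℝ (Fin 3),
      (∀ e ∈ F, pairDist f e = dF e) ∧ ∀ e : H, ℓ e = pairDist f e ^ 2 := by
  refine ⟨fun ⟨f, hF, hH⟩ => ⟨f, fun e he => ?_, fun ⟨e, he⟩ => ?_⟩,
    fun ⟨f, hF, hH⟩ => ⟨f, fun u v he => hF _ he, fun e u v hev => by rw [hH e, hev]; rfl⟩⟩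
  · induction e using Sym2.ind with | _ u v => exact hF u v he
  · induction e using Sym2.ind with | _ u v => exact hH ⟨_, he⟩ u v rfl

lemma DRealizable.exists_pairDist_eq {G : SimpleGraph V} {n k : ℕ} (hG : DRealizable G n)
    (hk : 1 ≤ k) (g : V → EuclideanSpace ℝ (Fin k)) :
    ∃ f : V → EuclideanSpace ℝ (Fin n), ∀ e ∈ G.edgeSet, pairDist f e = pairDist g e := by
  obtain ⟨f, hf⟩ := hG (pairDist g) (fun e _ => pairDist_nonneg g e)
    ⟨k, hk, g, isRealization_iff_pairDist.2 fun _ _ => rfl⟩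
  exact ⟨f, isRealization_iff_pairDist.1 hf⟩

lemma exists_pairDist_eq_of_convex_cayleySpace {E : Set (Sym2 V)}
    (hconv : Convex ℝ (CayleySpace ∅ E 0)) {k : ℕ} (f : V → EuclideanSpace ℝ (Fin k)) :
    ∃ g : V → EuclideanSpace ℝ (Fin 3), ∀ e ∈ E, pairDist g e = pairDist f e := by
  have hne : (CayleySpace ∅ E 0).Nonempty :=
    ⟨_, mem_cayleySpace_iff.2 ⟨0, by simp, fun _ => rfl⟩⟩
  have hsmul : ∀ c : ℝ, 0 ≤ c → ∀ ℓ ∈ CayleySpace ∅ E 0, c • ℓ ∈ CayleySpace ∅ E 0 := by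
    intro c hc ℓ hℓ
    obtain ⟨g, -, hg⟩ := mem_cayleySpace_iff.1 hℓ
    exact mem_cayleySpace_iff.2 ⟨√c • g, by simp, fun e => by
      simp [hg e, pairDist_sqrt_smul_sq g hc]⟩
  have hcoord : ∀ i, (fun e : E => pairDist (fun v => f v i) e ^ 2) ∈ CayleySpace ∅ E 0 :=
    fun i => mem_cayleySpace_iff.2 ⟨fun v => EuclideanSpace.single 0 (f v i), by simp,
      fun e => by rw [pairDist_single]⟩
  obtain ⟨g, -, hg⟩ := mem_cayleySpace_iff.1
    (hconv.sum_mem_of_smul_mem hne hsmul univ fun i _ => hcoord i)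
  refine ⟨g, fun e he => (pow_left_inj₀ (pairDist_nonneg g e) (pairDist_nonneg f e)
    two_ne_zero).1 ?_⟩
  rw [← hg ⟨e, he⟩, pairDist_sq_eq_sum f, Finset.sum_apply]

lemma convex_cayleySpace_of_dRealizable {G : SimpleGraph V} (hG : DRealizable G 3)
    {F H : Set (Sym2 V)} (hFH : F ∪ H ⊆ G.edgeSet) (dF : Sym2 V → ℝ) :
    Convex ℝ (CayleySpace F H dF) := by
  intro ℓ₀ hℓ₀ ℓ₁ hℓ₁ a b ha hb hab
  obtain ⟨f₀, hf₀F, hf₀H⟩ := mem_cayleySpace_iff.1 hℓ₀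
  obtain ⟨f₁, hf₁F, hf₁H⟩ := mem_cayleySpace_iff.1 hℓ₁
  obtain ⟨g, hg⟩ := exists_pairDist_sq_eq_add (√a • f₀) (√b • f₁)
  obtain ⟨f, hf⟩ := hG.exists_pairDist_eq (by norm_num) g
  have hfg : ∀ e ∈ F ∪ H, pairDist f e ^ 2 = a * pairDist f₀ e ^ 2 + b * pairDist f₁ e ^ 2 :=
    fun e he => by rw [hf e (hFH he), hg, pairDist_sqrt_smul_sq _ ha, pairDist_sqrt_smul_sq _ hb]
  refine mem_cayleySpace_iff.2 ⟨f, fun e he => ?_, fun e => ?_⟩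
  · have hsq := hfg e (Or.inl he)
    rw [hf₁F e he, ← hf₀F e he, ← add_mul, hab, one_mul] at hsq
    rw [← hf₀F e he]
    exact (pow_left_inj₀ (pairDist_nonneg f e) (pairDist_nonneg f₀ e) two_ne_zero).1 hsq
  · simp [hf₀H, hf₁H, hfg e (Or.inr e.2)]

end Realization

theorem inherentlyConvex_iff_threeRealizable_general {V : Type} (G : SimpleGraph V) :
    (∀ F H : Set (Sym2 V), F ∪ H = G.edgeSet → Disjoint F H →
      ∀ dF : Sym2 V → ℝ, (∀ e ∈ F, 0 ≤ dF e) →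
        Convex ℝ (CayleySpace F H dF)) ↔ DRealizable G 3 := by
  refine ⟨fun hconv d _ ⟨k, _, f, hf⟩ => ?_,
    fun hG F H hFH _ dF _ => convex_cayleySpace_of_dRealizable hG hFH.le dF⟩
  obtain ⟨g, hg⟩ :=
    exists_pairDist_eq_of_convex_cayleySpace (hconv ∅ G.edgeSet (by simp) (by simp) 0 (by simp)) f
  exact ⟨g, isRealization_iff_pairDist.2 fun e he =>
    (hg e he).trans (isRealization_iff_pairDist.1 hf e he)⟩

/-- A finite simple graph `G` has an inherently convex Cayley configuration
space (i.e. `Φ_H(G, F, d_F)` is convex for every partition `E = F ∪ H` of its edge set and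
every nonnegative edge-length assignment `d_F` on `F`) if and only if `G` is 3-realizable. -/
theorem inherentlyConvex_iff_threeRealizable {V : Type} [Fintype V] (G : SimpleGraph V) :
    (∀ F H : Set (Sym2 V), F ∪ H = G.edgeSet → Disjoint F H →
      ∀ dF : Sym2 V → ℝ, (∀ e ∈ F, 0 ≤ dF e) →
        Convex ℝ (CayleySpace F H dF)) ↔ DRealizable G 3 :=
  inherentlyConvex_iff_threeRealizable_general G
end

section
/- Let G_F = (V, F) be a partial 3-tree and let H be a set of additional edges on V such that G = (V, F ∪ H) is a complete 3-tree. Then for every Euclidean realizable edge-length assignment d_F : F → ℝ (d_F ≥ 0), the Cayley configuration space Φ_H(G, F, d_F), i.e. the set of vectors of squared distances over H attained by realizations of ((V, F), d_F) in ℝ³, is a convex subset of ℝ^H. -/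
/-- Add a new (apex) vertex adjacent to exactly the three vertices `a`, `b`, `c`. -/
def addApexToTriangle {V : Type} (G : SimpleGraph V) (a b c : V) :
    SimpleGraph (Option V) :=
  SimpleGraph.fromEdgeSet
    (Sym2.map Option.some '' G.edgeSet ∪
      {s((none : Option V), some a), s((none : Option V), some b), s((none : Option V), some c)})

/-- Complete 3-trees: `K₄` is a complete 3-tree, and adding a new vertex adjacent to
exactly the three vertices of a triangle of a complete 3-tree yields a complete 3-tree
(closed under graph isomorphism). -/
inductive IsComplete3Tree : ∀ {V : Type}, SimpleGraph V → Prop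
  | base : IsComplete3Tree (⊤ : SimpleGraph (Fin 4))
  | extend {V : Type} {G : SimpleGraph V} (a b c : V)
      (hab : G.Adj a b) (hac : G.Adj a c) (hbc : G.Adj b c)
      (hG : IsComplete3Tree G) : IsComplete3Tree (addApexToTriangle G a b c)
  | iso {V W : Type} {G : SimpleGraph V} {H : SimpleGraph W}
      (e : G ≃g H) (hG : IsComplete3Tree G) : IsComplete3Tree H

/-!
If `f₁, f₂` realize `((V, F), d_F)` and `p + q = 1`, then `v ↦ (√p • f₁ v, √q • f₂ v)` in
`ℝ³ × ℝ³` (with the `L²` norm) has squared edge lengths `p d₁² + q d₂²`: it still realizes `d_F`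
on `F`, and on `H` it realizes the convex combination. It only has to be folded back into `ℝ³`,
and any realization of a complete 3-tree in an inner product space can be, keeping all edge
lengths: each new vertex must only match its distances to the three vertices of a triangle, so its
component orthogonal to the plane of the triangle can be put along a normal of the image triangle.
-/
open scoped RealInnerProductSpace
open Module

section Apex

variable {V : Type} {G : SimpleGraph V} {a b c : V}

@[simp]
theorem addApexToTriangle_adj_some_some {u v : V} :
    (addApexToTriangle G a b c).Adj (some u) (some v) ↔ G.Adj u v := by
  rw [addApexToTriangle, SimpleGraph.fromEdgeSet_adj, ← Sym2.map_mk,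
    Set.mem_union, (Sym2.map.injective (Option.some_injective V)).mem_set_image]
  simp [and_iff_left_of_imp SimpleGraph.Adj.ne]

@[simp]
theorem addApexToTriangle_adj_none_some {v : V} :
    (addApexToTriangle G a b c).Adj none (some v) ↔ v = a ∨ v = b ∨ v = c := by
  have hnone (x : Sym2 V) : Sym2.map some x ≠ s(none, some v) := fun h => by
    obtain ⟨w, -, hw⟩ := Sym2.mem_map.mp (h ▸ Sym2.mem_mk_left none (some v))
    exact Option.some_ne_none w hw
  simp [addApexToTriangle, hnone]

end Apex

theorem WithLp.dist_toLp_sqrt_smul_sq {E₁ E₂ : Type*} [SeminormedAddCommGroup E₁]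
    [NormedSpace ℝ E₁] [SeminormedAddCommGroup E₂] [NormedSpace ℝ E₂] {p q : ℝ} (hp : 0 ≤ p)
    (hq : 0 ≤ q) (x₁ y₁ : E₁) (x₂ y₂ : E₂) :
    dist (WithLp.toLp 2 (√p • x₁, √q • x₂)) (WithLp.toLp 2 (√p • y₁, √q • y₂)) ^ 2 =
      p * dist x₁ y₁ ^ 2 + q * dist x₂ y₂ ^ 2 := by
  rw [WithLp.prod_dist_eq_of_L2, Real.sq_sqrt (by positivity)]
  simp [dist_smul₀, mul_pow, hp, hq]

section Realization

variable {E E' F : Type*} [NormedAddCommGroup E] [InnerProductSpace ℝ E]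
  [NormedAddCommGroup E'] [InnerProductSpace ℝ E'] [NormedAddCommGroup F] [InnerProductSpace ℝ F]

theorem norm_sub_eq_iff_inner_eq {x y : E} {x' y' : F} (hx : ‖x'‖ = ‖x‖) (hy : ‖y'‖ = ‖y‖) :
    ‖x' - y'‖ = ‖x - y‖ ↔ ⟪x', y'⟫ = ⟪x, y⟫ := by
  rw [← sq_eq_sq₀ (norm_nonneg _) (norm_nonneg _), norm_sub_sq_real, norm_sub_sq_real, hx, hy]
  constructor <;> intro h <;> linarith

theorem exists_inner_eq_of_gram_eq {ι : Type*} [Fintype ι] {u : ι → E} {u' : ι → F}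
    (hgram : ∀ i j, ⟪u' i, u' j⟫ = ⟪u i, u j⟫) (hdim : Fintype.card ι < finrank ℝ F)
    (w : E) : ∃ w' : F, ‖w'‖ = ‖w‖ ∧ ∀ i, ⟪w', u' i⟫ = ⟪w, u i⟫ := by
  -- `finrank` vanishes on infinite-dimensional spaces, so `hdim` makes `F` finite-dimensional.
  have : FiniteDimensional ℝ F := Module.finite_of_finrank_pos (by omega)
  set S := Submodule.span ℝ (Set.range u)
  set T := Submodule.span ℝ (Set.range u')
  have : FiniteDimensional ℝ S := FiniteDimensional.span_of_finite ℝ (Set.finite_range u)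
  obtain ⟨s, hs, r, hr, rfl⟩ := S.exists_add_mem_mem_orthogonal w
  obtain ⟨c, rfl⟩ := (Submodule.mem_span_range_iff_exists_fun ℝ).mp hs
  have hT : Tᗮ ≠ ⊥ := by
    intro h
    have := T.finrank_add_finrank_orthogonal
    have : finrank ℝ T ≤ Fintype.card ι := finrank_range_le_card u'
    rw [h, finrank_bot] at *
    omega
  obtain ⟨z, hz, hz0⟩ := Submodule.exists_mem_ne_zero_of_ne_bot hT
  set r' : F := (‖r‖ / ‖z‖) • z
  have hr' : r' ∈ Tᗮ := Tᗮ.smul_mem _ hz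
  have hr'_norm : ‖r'‖ = ‖r‖ := by simp [r', norm_smul, hz0]
  have hs' : ∑ j, c j • u' j ∈ T :=
    Submodule.sum_mem _ fun j _ => T.smul_mem _ (Submodule.subset_span ⟨j, rfl⟩)
  have hinner : ∀ i, ⟪∑ j, c j • u' j + r', u' i⟫ = ⟪∑ j, c j • u j + r, u i⟫ := fun i => by
    simp only [inner_add_left, sum_inner, real_inner_smul_left, hgram,
      S.inner_left_of_mem_orthogonal (Submodule.subset_span ⟨i, rfl⟩) hr,
      T.inner_left_of_mem_orthogonal (Submodule.subset_span ⟨i, rfl⟩) hr']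
  have hnorm_sum : ‖∑ j, c j • u' j‖ = ‖∑ j, c j • u j‖ := by
    rw [← sq_eq_sq₀ (norm_nonneg _) (norm_nonneg _), ← real_inner_self_eq_norm_sq,
      ← real_inner_self_eq_norm_sq]
    simp only [sum_inner, inner_sum, real_inner_smul_left, real_inner_smul_right, hgram]
  refine ⟨∑ j, c j • u' j + r', ?_, hinner⟩
  rw [← mul_self_inj (norm_nonneg _) (norm_nonneg _),
    norm_add_sq_eq_norm_sq_add_norm_sq_real (T.inner_right_of_mem_orthogonal hs' hr'),
    norm_add_sq_eq_norm_sq_add_norm_sq_real (S.inner_right_of_mem_orthogonal hs hr),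
    hnorm_sum, hr'_norm]

theorem exists_dist_eq_of_dist_eq {ι : Type*} [Fintype ι] {A : E} {P : ι → E} {a : F}
    {P' : ι → F} (hbase : ∀ i, dist (P' i) a = dist (P i) A)
    (hpair : ∀ i j, dist (P' i) (P' j) = dist (P i) (P j))
    (hdim : Fintype.card ι < finrank ℝ F) (x : E) :
    ∃ y : F, dist y a = dist x A ∧ ∀ i, dist y (P' i) = dist x (P i) := by
  simp only [dist_eq_norm] at *
  have hgram : ∀ i j, ⟪P' i - a, P' j - a⟫ = ⟪P i - A, P j - A⟫ := fun i j =>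
    (norm_sub_eq_iff_inner_eq (hbase i) (hbase j)).mp <| by
      simpa only [sub_sub_sub_cancel_right] using hpair i j
  obtain ⟨w, hw, hinner⟩ := exists_inner_eq_of_gram_eq hgram hdim (x - A)
  refine ⟨w + a, by rwa [add_sub_cancel_right], fun i => ?_⟩
  have := (norm_sub_eq_iff_inner_eq hw (hbase i)).mpr (hinner i)
  rwa [sub_sub_sub_cancel_right, sub_sub_eq_add_sub] at this

theorem exists_dist_eq_of_dist_eq_three {A B C : E} {a b c : F} (hF : 3 ≤ finrank ℝ F)
    (hab : dist b a = dist B A) (hac : dist c a = dist C A) (hbc : dist b c = dist B C)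
    (x : E) : ∃ y : F, dist y a = dist x A ∧ dist y b = dist x B ∧ dist y c = dist x C := by
  obtain ⟨y, hya, hy⟩ := exists_dist_eq_of_dist_eq (A := A) (a := a) (P := ![B, C]) (P' := ![b, c])
    (by simp [Fin.forall_fin_two, hab, hac]) (by simp [Fin.forall_fin_two, hbc, dist_comm])
    (by simp; omega) x
  exact ⟨y, hya, hy 0, hy 1⟩

theorem IsComplete3Tree.exists_dist_eq {V : Type} {G : SimpleGraph V} (hG : IsComplete3Tree G)
    (hF : 3 ≤ finrank ℝ F) (f : V → E) :
    ∃ g : V → F, ∀ u v, G.Adj u v → dist (g u) (g v) = dist (f u) (f v) := by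
  induction hG with
  | base =>
    -- `K₄` is placed one vertex at a time, repeating anchors while fewer than three are placed.
    obtain ⟨y₁, h₁₀, -, -⟩ := exists_dist_eq_of_dist_eq_three (A := f 0) (B := f 0) (C := f 0)
      (a := 0) (b := 0) (c := 0) hF (by simp) (by simp) (by simp) (f 1)
    obtain ⟨y₂, h₂₀, h₂₁, -⟩ := exists_dist_eq_of_dist_eq_three (A := f 0) (B := f 1) (C := f 1)
      (a := 0) hF h₁₀ h₁₀ (by simp) (f 2)
    obtain ⟨y₃, h₃₀, h₃₁, h₃₂⟩ := exists_dist_eq_of_dist_eq_three (A := f 0) (B := f 1)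
      (C := f 2) (a := 0) hF h₁₀ h₂₀ (by rw [dist_comm, h₂₁, dist_comm]) (f 3)
    refine ⟨![0, y₁, y₂, y₃], fun u v _ => ?_⟩
    fin_cases u <;> fin_cases v <;> simp_all [dist_comm] <;> exact dist_comm _ _
  | extend a b c hab hac hbc _ ih =>
    obtain ⟨g, hg⟩ := ih (f ∘ some)
    obtain ⟨y, hya, hyb, hyc⟩ := exists_dist_eq_of_dist_eq_three hF (hg b a hab.symm)
      (hg c a hac.symm) (hg b c hbc) (f none)
    refine ⟨fun o => o.elim y g, ?_⟩
    rintro (_ | u) (_ | v) huv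
    · exact absurd huv (SimpleGraph.irrefl _)
    · rcases addApexToTriangle_adj_none_some.mp huv with rfl | rfl | rfl <;> assumption
    · rcases addApexToTriangle_adj_none_some.mp huv.symm with rfl | rfl | rfl <;>
        simp [dist_comm, *]
    · exact hg u v (addApexToTriangle_adj_some_some.mp huv)
  | iso e _ ih =>
    obtain ⟨g, hg⟩ := ih (f ∘ e)
    exact ⟨g ∘ e.symm, fun u v huv => by simpa using hg _ _ (e.symm.map_adj_iff.mpr huv)⟩

theorem IsComplete3Tree.exists_dist_sq_eq_add {V : Type} {G : SimpleGraph V}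
    (hG : IsComplete3Tree G) (hF : 3 ≤ finrank ℝ F) (f₁ : V → E) (f₂ : V → E') {p q : ℝ}
    (hp : 0 ≤ p) (hq : 0 ≤ q) :
    ∃ g : V → F, ∀ u v, G.Adj u v →
      dist (g u) (g v) ^ 2 = p * dist (f₁ u) (f₁ v) ^ 2 + q * dist (f₂ u) (f₂ v) ^ 2 := by
  obtain ⟨g, hg⟩ := hG.exists_dist_eq hF fun v => WithLp.toLp 2 (√p • f₁ v, √q • f₂ v)
  exact ⟨g, fun u v huv => by rw [hg u v huv, WithLp.dist_toLp_sqrt_smul_sq hp hq]⟩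

end Realization

theorem cayleySpace_convex_of_complete3Tree_general {V : Type}
    (GF GH : SimpleGraph V)
    (h3tree : IsComplete3Tree (GF ⊔ GH))
    (dF : Sym2 V → ℝ) :
    Convex ℝ (CayleySpace GF.edgeSet GH.edgeSet dF) := by
  rintro ℓ₁ ⟨f₁, hf₁F, hf₁H⟩ ℓ₂ ⟨f₂, hf₂F, hf₂H⟩ p q hp hq hpq
  obtain ⟨g, hg⟩ := h3tree.exists_dist_sq_eq_add (F := EuclideanSpace ℝ (Fin 3)) (by simp)
    f₁ f₂ hp hq
  refine ⟨g, fun u v huv => ?_, fun e u v he => ?_⟩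
  · have hsq : dist (g u) (g v) ^ 2 = dF s(u, v) ^ 2 := by
      rw [hg u v (Or.inl huv), hf₁F u v huv, hf₂F u v huv, ← add_mul, hpq, one_mul]
    exact (sq_eq_sq₀ dist_nonneg (hf₁F u v huv ▸ dist_nonneg)).mp hsq
  · have huv : GH.Adj u v := by rw [← SimpleGraph.mem_edgeSet, ← he]; exact e.2
    simp [hf₁H e u v he, hf₂H e u v he, hg u v (Or.inr huv)]

/-- if `G_F = (V, F)` is a partial 3-tree and `H` is a set of additional
edges such that `G = (V, F ∪ H)` is a complete 3-tree, then for every Euclidean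
realizable nonnegative edge-length assignment `d_F` on `F`, the Cayley configuration
space `Φ_H(G, F, d_F)` of squared distances over `H` is a convex subset of `ℝ^H`. -/
theorem cayleySpace_convex_of_complete3Tree {V : Type} [Fintype V]
    (GF GH : SimpleGraph V) (hdisj : Disjoint GF.edgeSet GH.edgeSet)
    (h3tree : IsComplete3Tree (GF ⊔ GH))
    (dF : Sym2 V → ℝ) (hnn : ∀ e ∈ GF.edgeSet, 0 ≤ dF e)
    (hreal : EuclideanRealizable GF dF) :
    Convex ℝ (CayleySpace GF.edgeSet GH.edgeSet dF) :=
  cayleySpace_convex_of_complete3Tree_general GF GH h3tree dF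
end

section
/- Let G₁ = (V₁, E₁) and G₂ = (V₂, E₂) be finite simple graphs such that T := V₁ ∩ V₂ has at most 3 elements and every pair of distinct vertices of T is an edge of both G₁ and G₂ (T is a shared clique). If G₁ and G₂ are both 3-realizable, then their union G₁ ∪ G₂ = (V₁ ∪ V₂, E₁ ∪ E₂) is 3-realizable. -/
/-!
Realize `G₁` and `G₂` separately in `ℝ³`. The shared vertices form a clique in both graphs, so
the two realizations are congruent there, and a congruence of finitely many points extends to an
isometry of the whole space. Moving the realization of `G₂` by that isometry makes it agree with
the realization of `G₁` on the shared vertices, and the two glue to a realization of `G₁ ⊔ G₂`.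
-/

open scoped RealInnerProductSpace

section CongruentFamilies

variable {E : Type*} [NormedAddCommGroup E] [InnerProductSpace ℝ E] {ι : Type*}

lemma exists_linearIsometryEquiv_map_eq_of_inner_eq (s : Finset ι) (v w : ι → E)
    (h : ∀ i ∈ s, ∀ j ∈ s, ⟪v i, v j⟫ = ⟪w i, w j⟫) :
    ∃ L : E ≃ₗᵢ[ℝ] E, ∀ i ∈ s, L (v i) = w i := by
  classical
  induction s using Finset.induction_on with
  | empty => exact ⟨LinearIsometryEquiv.refl ℝ E, by simp⟩
  | @insert a s _ ih =>
    obtain ⟨L, hL⟩ := ih fun i hi j hj => h i (s.mem_insert_of_mem hi) j (s.mem_insert_of_mem hj)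
    have h_inner : ∀ i ∈ insert a s, ⟪L (v a), L (v i)⟫ = ⟪w a, w i⟫ := fun i hi => by
      rw [L.inner_map_map]; exact h a (s.mem_insert_self a) i hi
    have h_norm : ‖L (v a)‖ = ‖w a‖ := by
      have := h_inner a (s.mem_insert_self a)
      rwa [real_inner_self_eq_norm_sq, real_inner_self_eq_norm_sq,
        sq_eq_sq₀ (norm_nonneg _) (norm_nonneg _)] at this
    -- the reflection swapping `L (v a)` and `w a` fixes every `w i = L (v i)` with `i ∈ s`
    refine ⟨L.trans (ℝ ∙ (L (v a) - w a))ᗮ.reflection, fun i hi => ?_⟩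
    rcases Finset.mem_insert.mp hi with rfl | hi
    · exact Submodule.reflection_sub h_norm
    · rw [LinearIsometryEquiv.trans_apply, hL i hi]
      refine Submodule.reflection_mem_subspace_eq_self ?_
      rw [Submodule.mem_orthogonal_singleton_iff_inner_right, inner_sub_left,
        ← hL i hi, h_inner i (s.mem_insert_of_mem hi), hL i hi, sub_self]

lemma exists_affineIsometryEquiv_map_eq_of_dist_eq {s : Set ι} (hs : s.Finite) (p q : ι → E)
    (h : ∀ i ∈ s, ∀ j ∈ s, dist (p i) (p j) = dist (q i) (q j)) :
    ∃ g : E ≃ᵃⁱ[ℝ] E, ∀ i ∈ s, g (p i) = q i := by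
  rcases s.eq_empty_or_nonempty with rfl | ⟨i₀, hi₀⟩
  · exact ⟨AffineIsometryEquiv.refl ℝ E, by simp⟩
  have h_inner : ∀ i ∈ hs.toFinset, ∀ j ∈ hs.toFinset,
      ⟪p i - p i₀, p j - p i₀⟫ = ⟪q i - q i₀, q j - q i₀⟫ := by
    intro i hi j hj
    rw [hs.mem_toFinset] at hi hj
    simp only [real_inner_eq_norm_mul_self_add_norm_mul_self_sub_norm_sub_mul_self_div_two,
      sub_sub_sub_cancel_right, ← dist_eq_norm, h i hi j hj, h i hi i₀ hi₀, h j hj i₀ hi₀]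
  obtain ⟨L, hL⟩ := exists_linearIsometryEquiv_map_eq_of_inner_eq _ _ _ h_inner
  refine ⟨(AffineIsometryEquiv.vaddConst ℝ (p i₀)).symm.trans
    (L.toAffineIsometryEquiv.trans (AffineIsometryEquiv.vaddConst ℝ (q i₀))), fun i hi => ?_⟩
  simp [hL i (hs.mem_toFinset.mpr hi)]

end CongruentFamilies

section Realizations

variable {V : Type} {G H : SimpleGraph V} {d : Sym2 V → ℝ} {k : ℕ}

lemma IsRealization.mono {f : V → EuclideanSpace ℝ (Fin k)} (hGH : G ≤ H)
    (hf : IsRealization H d k f) : IsRealization G d k f :=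
  fun u v huv => hf u v (hGH huv)

lemma EuclideanRealizable.mono (hGH : G ≤ H) (hd : EuclideanRealizable H d) :
    EuclideanRealizable G d :=
  let ⟨k, hk, f, hf⟩ := hd
  ⟨k, hk, f, hf.mono hGH⟩

lemma IsRealization.isometry_comp {f : V → EuclideanSpace ℝ (Fin k)}
    {g : EuclideanSpace ℝ (Fin k) → EuclideanSpace ℝ (Fin k)} (hg : Isometry g)
    (hf : IsRealization G d k f) : IsRealization G d k (g ∘ f) :=
  fun u v huv => (hg.dist_eq _ _).trans (hf u v huv)

lemma IsRealization.dist_eq_of_isClique {m : ℕ} {f : V → EuclideanSpace ℝ (Fin k)}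
    {f' : V → EuclideanSpace ℝ (Fin m)} {s : Set V} (hf : IsRealization G d k f)
    (hf' : IsRealization H d m f') (hG : G.IsClique s) (hH : H.IsClique s) :
    ∀ i ∈ s, ∀ j ∈ s, dist (f i) (f j) = dist (f' i) (f' j) := by
  intro i hi j hj
  rcases eq_or_ne i j with rfl | hij
  · simp
  · rw [hf i j (hG hi hj hij), hf' i j (hH hi hj hij)]

lemma DRealizable.exists_isRealization_of_le (hG : DRealizable G k) (hGH : G ≤ H)
    (hd : ∀ e ∈ H.edgeSet, 0 ≤ d e) (hH : EuclideanRealizable H d) :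
    ∃ f : V → EuclideanSpace ℝ (Fin k), IsRealization G d k f :=
  hG d (fun _ he => hd _ (SimpleGraph.edgeSet_mono hGH he)) (hH.mono hGH)

lemma IsRealization.sup_piecewise {V₁ V₂ : Set V} [DecidablePred (· ∈ V₁)]
    {f₁ f₂ : V → EuclideanSpace ℝ (Fin k)}
    (h₁ : ∀ a b : V, G.Adj a b → a ∈ V₁ ∧ b ∈ V₁) (h₂ : ∀ a b : V, H.Adj a b → a ∈ V₂ ∧ b ∈ V₂)
    (hf₁ : IsRealization G d k f₁) (hf₂ : IsRealization H d k f₂)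
    (h_agree : ∀ x ∈ V₁ ∩ V₂, f₁ x = f₂ x) :
    IsRealization (G ⊔ H) d k (V₁.piecewise f₁ f₂) := by
  have h_eq₂ : ∀ x ∈ V₂, V₁.piecewise f₁ f₂ x = f₂ x := fun x hx => by
    by_cases hx₁ : x ∈ V₁
    · rw [Set.piecewise_eq_of_mem _ _ _ hx₁, h_agree x ⟨hx₁, hx⟩]
    · exact Set.piecewise_eq_of_notMem _ _ _ hx₁
  rintro u v (huv | huv)
  · obtain ⟨hu, hv⟩ := h₁ u v huv
    rw [Set.piecewise_eq_of_mem _ _ _ hu, Set.piecewise_eq_of_mem _ _ _ hv]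
    exact hf₁ u v huv
  · obtain ⟨hu, hv⟩ := h₂ u v huv
    rw [h_eq₂ u hu, h_eq₂ v hv]
    exact hf₂ u v huv

end Realizations

theorem union_threeRealizable_of_shared_clique_general {V : Type} [Fintype V]
    (V₁ V₂ : Set V) (G₁ G₂ : SimpleGraph V)
    (h₁ : ∀ a b : V, G₁.Adj a b → a ∈ V₁ ∧ b ∈ V₁)
    (h₂ : ∀ a b : V, G₂.Adj a b → a ∈ V₂ ∧ b ∈ V₂)
    (hclique₁ : ∀ a ∈ V₁ ∩ V₂, ∀ b ∈ V₁ ∩ V₂, a ≠ b → G₁.Adj a b)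
    (hclique₂ : ∀ a ∈ V₁ ∩ V₂, ∀ b ∈ V₁ ∩ V₂, a ≠ b → G₂.Adj a b)
    (hr₁ : DRealizable G₁ 3) (hr₂ : DRealizable G₂ 3) :
    DRealizable (G₁ ⊔ G₂) 3 := by
  classical
  intro d hd hER
  obtain ⟨f₁, hf₁⟩ := hr₁.exists_isRealization_of_le le_sup_left hd hER
  obtain ⟨f₂, hf₂⟩ := hr₂.exists_isRealization_of_le le_sup_right hd hER
  obtain ⟨g, hg⟩ := exists_affineIsometryEquiv_map_eq_of_dist_eq (V₁ ∩ V₂).toFinite f₂ f₁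
    (hf₂.dist_eq_of_isClique hf₁ (fun a ha b hb => hclique₂ a ha b hb)
      fun a ha b hb => hclique₁ a ha b hb)
  exact ⟨V₁.piecewise f₁ (g ∘ f₂), hf₁.sup_piecewise h₁ h₂ (hf₂.isometry_comp g.isometry)
    fun x hx => (hg x hx).symm⟩

/-- if `G₁` (with vertex set `V₁`) and `G₂` (with vertex set `V₂`) are
3-realizable and `T = V₁ ∩ V₂` has at most 3 elements, every pair of distinct vertices
of `T` being an edge of both graphs (a shared clique), then `G₁ ∪ G₂` is 3-realizable. -/
theorem union_threeRealizable_of_shared_clique {V : Type} [Fintype V]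
    (V₁ V₂ : Set V) (G₁ G₂ : SimpleGraph V)
    (h₁ : ∀ a b : V, G₁.Adj a b → a ∈ V₁ ∧ b ∈ V₁)
    (h₂ : ∀ a b : V, G₂.Adj a b → a ∈ V₂ ∧ b ∈ V₂)
    (hcover : V₁ ∪ V₂ = Set.univ)
    (hT : (V₁ ∩ V₂).ncard ≤ 3)
    (hclique₁ : ∀ a ∈ V₁ ∩ V₂, ∀ b ∈ V₁ ∩ V₂, a ≠ b → G₁.Adj a b)
    (hclique₂ : ∀ a ∈ V₁ ∩ V₂, ∀ b ∈ V₁ ∩ V₂, a ≠ b → G₂.Adj a b)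
    (hr₁ : DRealizable G₁ 3) (hr₂ : DRealizable G₂ 3) :
    DRealizable (G₁ ⊔ G₂) 3 :=
  union_threeRealizable_of_shared_clique_general V₁ V₂ G₁ G₂ h₁ h₂ hclique₁ hclique₂ hr₁ hr₂
end

section
/- Every finite tree is 1-realizable; in fact, every nonnegative edge-length assignment on a finite tree has a realization on the real line ℝ. -/
/-!
Root the tree at `r` and place each vertex `v` at the total length of the unique path from `r`
to `v`. For an edge `uv`, acyclicity forces one of the two root paths to be the other extended
by the edge `uv`, so the two positions differ by exactly `d uv`.
-/

namespace SimpleGraph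

variable {V : Type} {G : SimpleGraph V}

lemma IsAcyclic.eq_concat_or_eq_concat (hG : G.IsAcyclic) {u v w : V} {p : G.Walk u v}
    {q : G.Walk u w} (hp : p.IsPath) (hq : q.IsPath) (hadj : G.Adj v w) :
    q = p.concat hadj ∨ p = q.concat hadj.symm := by
  by_cases hw : w ∈ p.support
  · exact .inr (hG.path_concat hq hp hadj.symm hw)
  · exact .inl (hG.path_concat hp hq hadj
      (hG.mem_support_of_ne_mem_support_of_adj_of_isPath hq hp hadj.symm hw))

namespace Walk

def edgeLength (d : Sym2 V → ℝ) {u v : V} (p : G.Walk u v) : ℝ :=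
  (p.edges.map d).sum

@[simp]
lemma edgeLength_concat (d : Sym2 V → ℝ) {u v w : V} (p : G.Walk u v) (h : G.Adj v w) :
    (p.concat h).edgeLength d = p.edgeLength d + d s(v, w) := by
  simp [edgeLength, edges_concat]

end Walk

lemma IsTree.exists_real_realization (hG : G.IsTree) (d : Sym2 V → ℝ)
    (hd : ∀ e ∈ G.edgeSet, 0 ≤ d e) :
    ∃ x : V → ℝ, ∀ u v, G.Adj u v → |x u - x v| = d s(u, v) := by
  obtain ⟨r⟩ := hG.connected.nonempty
  choose P hP _ using hG.existsUnique_path r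
  refine ⟨fun v => (P v).edgeLength d, fun u v huv => ?_⟩
  have hduv : 0 ≤ d s(u, v) := hd _ huv
  dsimp only
  rcases hG.isAcyclic.eq_concat_or_eq_concat (hP u) (hP v) huv with h | h
  · rw [h, Walk.edgeLength_concat, sub_add_cancel_left, abs_neg, abs_of_nonneg hduv]
  · rw [h, Walk.edgeLength_concat, add_sub_cancel_left, Sym2.eq_swap, abs_of_nonneg hduv]

lemma IsTree.exists_isRealization_one (hG : G.IsTree) (d : Sym2 V → ℝ)
    (hd : ∀ e ∈ G.edgeSet, 0 ≤ d e) :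
    ∃ f : V → EuclideanSpace ℝ (Fin 1), IsRealization G d 1 f := by
  obtain ⟨x, hx⟩ := hG.exists_real_realization d hd
  refine ⟨fun v => EuclideanSpace.single 0 (x v), fun u v huv => ?_⟩
  rw [PiLp.dist_single_same, Real.dist_eq, hx u v huv]

end SimpleGraph

theorem tree_oneRealizable_general {V : Type} (G : SimpleGraph V) (hG : G.IsTree) :
    DRealizable G 1 ∧
    ∀ d : Sym2 V → ℝ, (∀ e ∈ G.edgeSet, 0 ≤ d e) →
      ∃ f : V → EuclideanSpace ℝ (Fin 1), IsRealization G d 1 f :=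
  ⟨fun d hd _ => hG.exists_isRealization_one d hd, hG.exists_isRealization_one⟩

/-- every finite tree is 1-realizable; in fact every nonnegative
edge-length assignment on a finite tree has a realization on the real line. -/
theorem tree_oneRealizable {V : Type} [Fintype V] (G : SimpleGraph V) (hG : G.IsTree) :
    DRealizable G 1 ∧
    ∀ d : Sym2 V → ℝ, (∀ e ∈ G.edgeSet, 0 ≤ d e) →
      ∃ f : V → EuclideanSpace ℝ (Fin 1), IsRealization G d 1 f :=
  tree_oneRealizable_general G hG
end

section
/- The complete tripartite graph K_{2,2,2} (the octahedron graph, with three parts of size two) is not 3-realizable: there exists a Euclidean realizable edge-length assignment on K_{2,2,2} that has no realization in ℝ³. -/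
/-- The complete tripartite graph `K_{2,2,2}` (the octahedron): six vertices in three
pairs, two vertices adjacent iff they lie in different pairs. -/
def K222 : SimpleGraph (Fin 3 × Fin 2) where
  Adj p q := p.1 ≠ q.1
  symm := ⟨fun _ _ h => Ne.symm h⟩
  loopless := ⟨fun _ h => h rfl⟩

/-! Place `y₁ = (1,1)` at the origin, `x₀ = (0,0)` and `z₀ = (2,0)` at `∓e₀`, and
`x₁ = (0,1)`, `y₀ = (1,0)`, `z₁ = (2,1)` at `e₁, e₂, e₃` in `ℝ⁴`, and take the induced
lengths. Since `|x₀y₁| + |y₁z₀| = |x₀z₀|`, every realization puts `y₁` at the midpoint of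
`x₀z₀`, and Apollonius' theorem then recovers the three non-edge lengths `|x₀x₁|`, `|y₀y₁|`,
`|z₀z₁|`. So every realization is congruent to the one in `ℝ⁴`, hence contains four
orthonormal vectors. -/

open scoped RealInnerProductSpace

section Congruent

variable {ι E F : Type*} [NormedAddCommGroup E] [InnerProductSpace ℝ E]
  [NormedAddCommGroup F] [InnerProductSpace ℝ F] {v₁ : ι → E} {v₂ : ι → F}

theorem Congruent.inner_sub_sub (h : Congruent v₁ v₂) (i j k : ι) :
    ⟪v₁ i - v₁ k, v₁ j - v₁ k⟫ = ⟪v₂ i - v₂ k, v₂ j - v₂ k⟫ := by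
  simp only [real_inner_eq_norm_mul_self_add_norm_mul_self_sub_norm_sub_mul_self_div_two,
    sub_sub_sub_cancel_right, ← dist_eq_norm, congruent_iff_dist_eq.mp h]

theorem Congruent.orthonormal_sub {κ : Type*} (h : Congruent v₁ v₂) (w : κ → ι) (o : ι)
    (hv₂ : Orthonormal ℝ fun a => v₂ (w a) - v₂ o) :
    Orthonormal ℝ fun a => v₁ (w a) - v₁ o := by
  classical
  rw [orthonormal_iff_ite] at hv₂ ⊢
  intro a b
  rw [h.inner_sub_sub, hv₂]

end Congruent

section Apollonius

variable {E F : Type*} [NormedAddCommGroup E] [InnerProductSpace ℝ E]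
  [NormedAddCommGroup F] [InnerProductSpace ℝ F] {a b c : E} {a' b' c' : F}

theorem dist_eq_of_dist_midpoint_eq (hbc : dist b c = dist b' c')
    (hac : dist a c = dist a' c')
    (ham : dist a (midpoint ℝ b c) = dist a' (midpoint ℝ b' c')) :
    dist a b = dist a' b' := by
  have h := EuclideanGeometry.dist_sq_add_dist_sq_eq_two_mul_dist_midpoint_sq_add_half_dist_sq a b c
  have h' :=
    EuclideanGeometry.dist_sq_add_dist_sq_eq_two_mul_dist_midpoint_sq_add_half_dist_sq a' b' c'
  rw [hbc, hac, ham] at h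
  exact (sq_eq_sq₀ dist_nonneg dist_nonneg).mp (by linarith)

theorem dist_midpoint_eq_of_dist_eq (hbc : dist b c = dist b' c')
    (hab : dist a b = dist a' b') (hac : dist a c = dist a' c') :
    dist a (midpoint ℝ b c) = dist a' (midpoint ℝ b' c') := by
  have h := EuclideanGeometry.dist_sq_add_dist_sq_eq_two_mul_dist_midpoint_sq_add_half_dist_sq a b c
  have h' :=
    EuclideanGeometry.dist_sq_add_dist_sq_eq_two_mul_dist_midpoint_sq_add_half_dist_sq a' b' c'
  rw [hbc, hab, hac] at h
  exact (sq_eq_sq₀ dist_nonneg dist_nonneg).mp (by linarith)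

end Apollonius

namespace K222

variable {E F : Type*} [NormedAddCommGroup E] [InnerProductSpace ℝ E]
  [NormedAddCommGroup F] [InnerProductSpace ℝ F]

theorem congruent_of_dist_eq_of_adj {f : Fin 3 × Fin 2 → E} {g : Fin 3 × Fin 2 → F}
    (hg : g (1, 1) = midpoint ℝ (g (0, 0)) (g (2, 0)))
    (hfg : ∀ p q, K222.Adj p q → dist (f p) (f q) = dist (g p) (g q)) :
    Congruent f g := by
  have edge (p q : Fin 3 × Fin 2) (h : p.1 ≠ q.1) : dist (f p) (f q) = dist (g p) (g q) :=
    hfg p q h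
  have hf : f (1, 1) = midpoint ℝ (f (0, 0)) (f (2, 0)) := by
    apply eq_midpoint_of_dist_eq_half <;>
      rw [edge _ _ (by decide), edge _ _ (by decide), hg] <;> simp [div_eq_inv_mul]
  have hxz := edge (0, 0) (2, 0) (by decide)
  have hx : dist (f (0, 1)) (f (0, 0)) = dist (g (0, 1)) (g (0, 0)) :=
    dist_eq_of_dist_midpoint_eq hxz (edge _ _ (by decide))
      (by rw [← hf, ← hg]; exact edge _ _ (by decide))
  have hy : dist (f (1, 0)) (f (1, 1)) = dist (g (1, 0)) (g (1, 1)) := by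
    rw [hf, hg]
    exact dist_midpoint_eq_of_dist_eq hxz (edge _ _ (by decide)) (edge _ _ (by decide))
  have hz : dist (f (2, 1)) (f (2, 0)) = dist (g (2, 1)) (g (2, 0)) :=
    dist_eq_of_dist_midpoint_eq (c := f (0, 0)) (c' := g (0, 0))
      (by rw [dist_comm, hxz, dist_comm]) (edge _ _ (by decide))
      (by rw [midpoint_comm, ← hf, midpoint_comm, ← hg]; exact edge _ _ (by decide))
  have pair : ∀ i : Fin 3, dist (f (i, 0)) (f (i, 1)) = dist (g (i, 0)) (g (i, 1)) := by
    intro i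
    fin_cases i
    · exact (dist_comm _ _).trans (hx.trans (dist_comm _ _))
    · exact hy
    · exact (dist_comm _ _).trans (hz.trans (dist_comm _ _))
  rw [congruent_iff_pairwise_dist_eq]
  rintro ⟨i, j⟩ ⟨i', j'⟩ hne
  by_cases hi : i = i'
  · subst hi
    obtain ⟨rfl, rfl⟩ | ⟨rfl, rfl⟩ : j = 0 ∧ j' = 1 ∨ j = 1 ∧ j' = 0 := by
      have : j ≠ j' := fun h => hne (by rw [h])
      omega
    · exact pair i
    · rw [dist_comm, pair, dist_comm]
  · exact edge _ _ hi

noncomputable def config (p : Fin 3 × Fin 2) : EuclideanSpace ℝ (Fin 4) :=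
  let e (i : Fin 4) : EuclideanSpace ℝ (Fin 4) := EuclideanSpace.single i 1
  ![![-e 0, e 1], ![e 2, 0], ![e 0, e 3]] p.1 p.2

noncomputable def lengths : Sym2 (Fin 3 × Fin 2) → ℝ :=
  Sym2.lift ⟨fun p q => dist (config p) (config q), fun _ _ => dist_comm _ _⟩

theorem lengths_nonneg (e : Sym2 (Fin 3 × Fin 2)) : 0 ≤ lengths e :=
  e.ind fun _ _ => dist_nonneg (x := config _)

theorem isRealization_config : IsRealization K222 lengths 4 config :=
  fun _ _ _ => rfl

theorem config_eq_midpoint : config (1, 1) = midpoint ℝ (config (0, 0)) (config (2, 0)) :=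
  (midpoint_neg_self ℝ _).symm

theorem orthonormal_config :
    Orthonormal ℝ fun i => config (![(2, 0), (0, 1), (1, 0), (2, 1)] i) - config (1, 1) := by
  convert EuclideanSpace.orthonormal_single (𝕜 := ℝ) (ι := Fin 4) using 2 with i
  fin_cases i <;> simp [config]

theorem four_le_of_isRealization {k : ℕ} {f : Fin 3 × Fin 2 → EuclideanSpace ℝ (Fin k)}
    (hf : IsRealization K222 lengths k f) : 4 ≤ k := by
  have hcongr : Congruent f config := congruent_of_dist_eq_of_adj config_eq_midpoint hf
  simpa only [Fintype.card_fin, finrank_euclideanSpace_fin] using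
    (hcongr.orthonormal_sub _ _ orthonormal_config).linearIndependent.fintype_card_le_finrank

end K222

/-- `K_{2,2,2}` is not 3-realizable: there is a Euclidean realizable
nonnegative edge-length assignment on it with no realization in `ℝ³`. -/
theorem K222_not_threeRealizable :
    ¬ DRealizable K222 3 ∧
    ∃ d : Sym2 (Fin 3 × Fin 2) → ℝ, (∀ e ∈ K222.edgeSet, 0 ≤ d e) ∧
      EuclideanRealizable K222 d ∧
      ¬ ∃ f : Fin 3 × Fin 2 → EuclideanSpace ℝ (Fin 3), IsRealization K222 d 3 f := by
  have nonneg : ∀ e ∈ K222.edgeSet, 0 ≤ K222.lengths e := fun e _ => K222.lengths_nonneg e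
  have realizable : EuclideanRealizable K222 K222.lengths :=
    ⟨4, by norm_num, K222.config, K222.isRealization_config⟩
  have not_three : ¬ ∃ f, IsRealization K222 K222.lengths 3 f := fun ⟨_, hf⟩ =>
    absurd (K222.four_le_of_isRealization hf) (by norm_num)
  exact ⟨fun h => not_three (h _ nonneg realizable), K222.lengths, nonneg, realizable, not_three⟩
end

section
/- Let k ≥ 1 and let r₁, …, r_k ≥ 0. The set of real numbers ℓ ≥ 0 for which there exist points v₀, v₁, …, v_k ∈ ℝ³ with ‖v_{i−1} − v_i‖ = r_i for i = 1, …, k and ‖v₀ − v_k‖ = ℓ is exactly the closed interval [max(0, 2·max_i r_i − Σ_i r_i), Σ_i r_i]. In particular, the Cayley configuration space of the end-to-end distance of a path graph with fixed edge lengths is an interval, hence convex. -/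
/-!
Writing `wᵢ = vᵢ - vᵢ₋₁`, the question is which lengths `‖∑ wᵢ‖` occur for vectors with
`‖wᵢ‖ = rᵢ`. The triangle inequality bounds `‖∑ wᵢ‖` above by `∑ rᵢ` and below by
`rⱼ - ∑_{i ≠ j} rᵢ`. Conversely every value in between is realised by induction on the number of
links: in dimension at least two the sphere of radius `ρ` is connected, so as `z` runs over it,
`‖a + z‖` takes every value between `|‖a‖ - ρ|` and `‖a‖ + ρ`.
-/

open Metric

theorem Fin.partialSum_last {M : Type*} [AddCommMonoid M] {n : ℕ} (f : Fin n → M) :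
    Fin.partialSum f (Fin.last n) = ∑ i, f i := by
  simp [Fin.partialSum, List.take_of_length_le, List.sum_ofFn]

theorem Finset.two_mul_sup'_sub_le_iff {ι : Type*} {s : Finset ι} (hs : s.Nonempty) (f : ι → ℝ)
    (c a : ℝ) : 2 * s.sup' hs f - c ≤ a ↔ ∀ i ∈ s, 2 * f i - c ≤ a := by
  constructor
  · intro h i hi
    linarith [Finset.le_sup' f hi]
  · intro h
    have : s.sup' hs f ≤ (a + c) / 2 := Finset.sup'_le hs f fun i hi => by linarith [h i hi]
    linarith

section Seminormed

variable {E : Type*} [SeminormedAddCommGroup E]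

theorem exists_path_dist_iff_exists_norm_sum {n : ℕ} {r : Fin n → ℝ} {ℓ : ℝ} :
    (∃ v : Fin (n + 1) → E, (∀ i, dist (v i.castSucc) (v i.succ) = r i) ∧
      dist (v 0) (v (Fin.last n)) = ℓ) ↔
    ∃ w : Fin n → E, (∀ i, ‖w i‖ = r i) ∧ ‖∑ i, w i‖ = ℓ := by
  constructor
  · rintro ⟨v, hv, hℓ⟩
    set w : Fin n → E := fun i => -v i.castSucc + v i.succ
    have hsum : v 0 + Fin.partialSum w (Fin.last n) = v (Fin.last n) :=
      congrFun (Fin.partialSum_left_neg v) (Fin.last n)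
    refine ⟨w, fun i => ?_, ?_⟩
    · rw [← hv, dist_comm, dist_eq_norm, ← neg_add_eq_sub]
    · rw [← hℓ, ← hsum, dist_self_add_right, Fin.partialSum_last]
  · rintro ⟨w, hw, hℓ⟩
    refine ⟨Fin.partialSum w, fun i => ?_, ?_⟩
    · rw [Fin.partialSum_succ, dist_self_add_right, hw]
    · rw [Fin.partialSum_zero, Fin.partialSum_last, dist_zero_left, hℓ]

theorem two_mul_norm_sub_sum_norm_le_norm_sum {ι : Type*} [Fintype ι] (w : ι → E) (j : ι) :
    2 * ‖w j‖ - ∑ i, ‖w i‖ ≤ ‖∑ i, w i‖ := by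
  classical
  have hsplit := Finset.add_sum_erase Finset.univ w (Finset.mem_univ j)
  have hsplit_norm := Finset.add_sum_erase Finset.univ (‖w ·‖) (Finset.mem_univ j)
  have hrest : ‖∑ i ∈ Finset.univ.erase j, w i‖ ≤ ∑ i ∈ Finset.univ.erase j, ‖w i‖ :=
    norm_sum_le _ _
  have hj : ‖w j‖ ≤ ‖∑ i, w i‖ + ‖∑ i ∈ Finset.univ.erase j, w i‖ := by
    rw [← hsplit]
    simpa using norm_sub_le (w j + ∑ i ∈ Finset.univ.erase j, w i) (∑ i ∈ Finset.univ.erase j, w i)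
  linarith

end Seminormed

section RealNormed

variable {E : Type*} [NormedAddCommGroup E] [NormedSpace ℝ E]

theorem exists_norm_eq_one_and_eq_norm_smul [Nontrivial E] (a : E) :
    ∃ e : E, ‖e‖ = 1 ∧ a = ‖a‖ • e := by
  by_cases ha : a = 0
  · obtain ⟨e, he⟩ := exists_norm_eq E zero_le_one
    exact ⟨e, he, by simp [ha]⟩
  · refine ⟨‖a‖⁻¹ • a, norm_smul_inv_norm ha, ?_⟩
    rw [smul_smul, mul_inv_cancel₀ (norm_ne_zero_iff.mpr ha), one_smul]

/-- With `a = ‖a‖ • e`, the endpoints `z = ∓ ρ • e` give `|‖a‖ - ρ|` and `‖a‖ + ρ`, and the sphere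
joining them is connected. -/
theorem exists_norm_eq_and_norm_add_eq (hE : 1 < Module.rank ℝ E) (a : E) {ρ ℓ : ℝ}
    (hρ : 0 ≤ ρ) (hlo : |‖a‖ - ρ| ≤ ℓ) (hhi : ℓ ≤ ‖a‖ + ρ) :
    ∃ z : E, ‖z‖ = ρ ∧ ‖a + z‖ = ℓ := by
  have : Nontrivial E := rank_pos_iff_nontrivial.mp (zero_lt_one.trans hE)
  obtain ⟨e, he, hae⟩ := exists_norm_eq_one_and_eq_norm_smul a
  have hmem : ∀ t, |t| = ρ → t • e ∈ sphere (0 : E) ρ := fun t ht => by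
    rw [mem_sphere_zero_iff_norm, norm_smul, he, mul_one, Real.norm_eq_abs, ht]
  have hnorm : ∀ t, ‖a + t • e‖ = |‖a‖ + t| := fun t => by
    rw [show a + t • e = (‖a‖ + t) • e by rw [add_smul, ← hae], norm_smul, he, mul_one,
      Real.norm_eq_abs]
  obtain ⟨z, hz, hzℓ⟩ := (isConnected_sphere hE 0 hρ).isPreconnected.intermediate_value
    (hmem (-ρ) (by rw [abs_neg, abs_of_nonneg hρ])) (hmem ρ (abs_of_nonneg hρ))
    (f := fun z => ‖a + z‖) (by fun_prop)
    (show ℓ ∈ Set.Icc _ _ from ⟨by rwa [hnorm, ← sub_eq_add_neg],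
      by rwa [hnorm, abs_of_nonneg (by positivity)]⟩)
  exact ⟨z, mem_sphere_zero_iff_norm.mp hz, hzℓ⟩

/-- The first `n` links are laid out so that their sum has length `min (∑ r') (ℓ + ρ)`; the last
link, of length `ρ`, then closes the gap to `ℓ`. -/
theorem exists_norm_sum_eq (hE : 1 < Module.rank ℝ E) :
    ∀ {n : ℕ} (r : Fin n → ℝ) {ℓ : ℝ}, (∀ i, 0 ≤ r i) → 0 ≤ ℓ → ℓ ≤ ∑ i, r i →
      (∀ j, 2 * r j - ∑ i, r i ≤ ℓ) → ∃ w : Fin n → E, (∀ i, ‖w i‖ = r i) ∧ ‖∑ i, w i‖ = ℓ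
  | 0, r, ℓ, _, hℓ₀, hℓS, _ => ⟨0, fun i => i.elim0, by simpa using (le_antisymm hℓS hℓ₀).symm⟩
  | n + 1, r, ℓ, hr, hℓ₀, hℓS, hℓr => by
    set r' : Fin n → ℝ := fun i => r i.castSucc
    set ρ := r (Fin.last n)
    have hS : ∑ i, r i = ∑ i, r' i + ρ := Fin.sum_univ_castSucc r
    have hS'₀ : 0 ≤ ∑ i, r' i := Finset.sum_nonneg fun i _ => hr _
    have hρ : 0 ≤ ρ := hr _
    have hρℓ : 2 * ρ - ∑ i, r i ≤ ℓ := hℓr _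
    set x := min (∑ i, r' i) (ℓ + ρ)
    obtain ⟨w', hw', hw'x⟩ := exists_norm_sum_eq hE r' (ℓ := x) (fun i => hr _)
      (le_min hS'₀ (by linarith)) (min_le_left _ _) fun j => by
        have : 2 * r' j - ∑ i, r i ≤ ℓ := hℓr j.castSucc
        have : r' j ≤ ∑ i, r' i := Finset.single_le_sum (fun i _ => hr _) (Finset.mem_univ j)
        exact le_min (by linarith) (by linarith)
    have hxρ : x ≤ ℓ + ρ := min_le_right _ _
    have hρx : ρ - ℓ ≤ x := le_min (by linarith) (by linarith)
    have hℓx : ℓ - ρ ≤ x := le_min (by linarith) (by linarith)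
    obtain ⟨z, hz, hzℓ⟩ := exists_norm_eq_and_norm_add_eq hE (∑ i, w' i) (ℓ := ℓ) hρ
      (by rw [hw'x, abs_sub_le_iff]; constructor <;> linarith) (by linarith)
    refine ⟨Fin.snoc w' z, fun i => ?_, ?_⟩
    · induction i using Fin.lastCases with
      | last => simpa using hz
      | cast j => simpa using hw' j
    · simpa [Fin.sum_univ_castSucc] using hzℓ

theorem exists_norm_sum_eq_iff (hE : 1 < Module.rank ℝ E) {n : ℕ} {r : Fin n → ℝ}
    (hr : ∀ i, 0 ≤ r i) {ℓ : ℝ} :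
    (∃ w : Fin n → E, (∀ i, ‖w i‖ = r i) ∧ ‖∑ i, w i‖ = ℓ) ↔
      0 ≤ ℓ ∧ ℓ ≤ ∑ i, r i ∧ ∀ j, 2 * r j - ∑ i, r i ≤ ℓ := by
  constructor
  · rintro ⟨w, hw, rfl⟩
    simp only [← hw]
    exact ⟨norm_nonneg _, norm_sum_le _ _, two_mul_norm_sub_sum_norm_le_norm_sum w⟩
  · rintro ⟨hℓ₀, hℓS, hℓr⟩
    exact exists_norm_sum_eq hE r hr hℓ₀ hℓS hℓr

end RealNormed

/-- for a path with `k ≥ 1` fixed nonnegative edge lengths `r₁, …, r_k` in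
`ℝ³`, the attainable end-to-end distances form exactly the interval
`[max(0, 2·maxᵢ rᵢ − Σᵢ rᵢ), Σᵢ rᵢ]`; in particular this Cayley configuration space is an
interval, hence convex. -/
theorem path_cayley_space (k : ℕ) (hk : 1 ≤ k) (r : Fin k → ℝ) (hr : ∀ i, 0 ≤ r i) :
    {ℓ : ℝ | 0 ≤ ℓ ∧ ∃ v : Fin (k + 1) → EuclideanSpace ℝ (Fin 3),
        (∀ i : Fin k, dist (v i.castSucc) (v i.succ) = r i) ∧
        dist (v 0) (v (Fin.last k)) = ℓ} =
      Set.Icc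
        (max 0 (2 * Finset.univ.sup' ⟨⟨0, hk⟩, Finset.mem_univ _⟩ r - ∑ i, r i))
        (∑ i, r i) ∧
    Convex ℝ {ℓ : ℝ | 0 ≤ ℓ ∧ ∃ v : Fin (k + 1) → EuclideanSpace ℝ (Fin 3),
        (∀ i : Fin k, dist (v i.castSucc) (v i.succ) = r i) ∧
        dist (v 0) (v (Fin.last k)) = ℓ} := by
  have hrank : 1 < Module.rank ℝ (EuclideanSpace ℝ (Fin 3)) := by
    rw [← Module.finrank_eq_rank, finrank_euclideanSpace_fin]
    norm_num
  refine (fun hset => ⟨hset, hset ▸ convex_Icc _ _⟩) ?_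
  ext ℓ
  have hmax := Finset.two_mul_sup'_sub_le_iff ⟨⟨0, hk⟩, Finset.mem_univ _⟩ r (∑ i, r i) ℓ
  simp only [Finset.mem_univ, forall_const] at hmax
  rw [Set.mem_ofPred_eq, exists_path_dist_iff_exists_norm_sum, exists_norm_sum_eq_iff hrank hr,
    Set.mem_Icc, max_le_iff]
  tauto
end
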